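/- The entropy gap between the moment-matched Gaussian P and the Gaussian mixture Q satisfies H(P) − H(Q) ≥ −(1/4) E_{(i,j)∼w×w}[ (μ_i − μ_j)² (σ_i² + σ_j²) / (σ_i² σ_j²) ], i.e., H(Q) ≤ H(P) + (1/4) Σ_{i,j} w_i w_j (μ_i − μ_j)²(σ_i² + σ_j²)/(σ_i² σ_j²). -/

import Mathlib

/-!
Gibbs' inequality against the moment-matched Gaussian `P` gives `H(Q) ≤ -∫ Q log P`. Since
`log P` is a quadratic polynomial, `∫ Q log P` only depends on the mass and the variance of `Q`,
which are those of `P`; so `-∫ Q log P = -∫ P log P = H(P)`. Thus the Gaussian already bounds the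
entropy of the mixture, and the correction term, being nonnegative, only weakens the bound.
The Bochner integral `H(Q)` means something only once `Q log Q` is integrable; this follows from
`Q` being bounded, which caps `Q log Q` from above, while Gibbs' pointwise inequality bounds it
from below.
-/

open Finset MeasureTheory Real ProbabilityTheory
open scoped NNReal

lemma mul_log_add_sub_le_mul_log {p q : ℝ} (hq : 0 ≤ q) (hp : 0 < p) :
    q * log p + (q - p) ≤ q * log q := by
  rcases hq.eq_or_lt with rfl | hq
  · simpa using hp.le
  have h := mul_le_mul_of_nonneg_left (self_sub_one_le_mul_log (div_pos hq hp).le) hp.le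
  rw [log_div hq.ne' hp.ne'] at h
  field_simp at h
  linarith

section FiniteSum

variable {ι : Type*} [Fintype ι] {w : ι → ℝ}

lemma sum_mul_add_sub_sq (hw : ∑ i, w i = 1) (m s : ι → ℝ) :
    ∑ i, w i * (s i + (m i - ∑ j, w j * m j) ^ 2)
      = ∑ i, w i * (m i ^ 2 + s i) - (∑ j, w j * m j) ^ 2 := by
  set M := ∑ j, w j * m j
  have h : ∀ i, w i * (s i + (m i - M) ^ 2)
      = w i * (m i ^ 2 + s i) - 2 * M * (w i * m i) + M ^ 2 * w i := fun i ↦ by ring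
  rw [sum_congr rfl fun i _ ↦ h i, sum_add_distrib, sum_sub_distrib, ← mul_sum, ← mul_sum, hw]
  ring

lemma sum_mul_pos_of_sum_pos {f : ι → ℝ} (hw : ∀ i, 0 ≤ w i) (hw_sum : 0 < ∑ i, w i)
    (hf : ∀ i, 0 < f i) : 0 < ∑ i, w i * f i := by
  obtain ⟨i, -, hi⟩ := exists_lt_of_sum_lt (by simpa using hw_sum : ∑ _ : ι, (0 : ℝ) < ∑ i, w i)
  exact sum_pos' (fun j _ ↦ mul_nonneg (hw j) (hf j).le) ⟨i, mem_univ i, mul_pos hi (hf i)⟩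

end FiniteSum

section Gibbs

variable {α : Type*} [MeasurableSpace α] {μ : Measure α} {p q : α → ℝ}

lemma integrable_mul_log_of_le {M : ℝ} (hq_meas : AEStronglyMeasurable q μ)
    (hq0 : ∀ x, 0 ≤ q x) (hqM : ∀ x, q x ≤ M) (hp : ∀ x, 0 < p x)
    (hq_int : Integrable q μ) (hp_int : Integrable p μ)
    (hqp_int : Integrable (fun x ↦ q x * log (p x)) μ) :
    Integrable (fun x ↦ q x * log (q x)) μ := by
  refine integrable_of_le_of_le
    (hq_meas.mul (measurable_log.comp_aemeasurable hq_meas.aemeasurable).aestronglyMeasurable)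
    (ae_of_all _ fun x ↦ mul_log_add_sub_le_mul_log (hq0 x) (hp x))
    (ae_of_all _ fun x ↦ ?_) (hqp_int.add (hq_int.sub hp_int)) (hq_int.mul_const (log M))
  rcases (hq0 x).eq_or_lt with h | h
  · simp [← h]
  · exact mul_le_mul_of_nonneg_left (log_le_log h (hqM x)) h.le

lemma integral_neg_mul_log_le (hq0 : ∀ x, 0 ≤ q x) (hp : ∀ x, 0 < p x)
    (hq_int : Integrable q μ) (hp_int : Integrable p μ)
    (hqp_int : Integrable (fun x ↦ q x * log (p x)) μ)
    (hqq_int : Integrable (fun x ↦ q x * log (q x)) μ) (hpq : ∫ x, p x ∂μ ≤ ∫ x, q x ∂μ) :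
    ∫ x, -(q x * log (q x)) ∂μ ≤ -∫ x, q x * log (p x) ∂μ := by
  have hdiff : Integrable (fun x ↦ q x - p x) μ := hq_int.sub hp_int
  have h : ∫ x, q x * log (p x) + (q x - p x) ∂μ ≤ ∫ x, q x * log (q x) ∂μ :=
    integral_mono (hqp_int.add hdiff) hqq_int fun x ↦ mul_log_add_sub_le_mul_log (hq0 x) (hp x)
  rw [integral_add hqp_int hdiff, integral_sub hq_int hp_int] at h
  rw [integral_neg]
  linarith

end Gibbs

section Gaussian

variable {m : ℝ} {v : ℝ≥0}

lemma gaussianPDFReal_le (m : ℝ) (v : ℝ≥0) (x : ℝ) :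
    gaussianPDFReal m v x ≤ (√(2 * π * v))⁻¹ := by
  rw [gaussianPDFReal]
  refine mul_le_of_le_one_right (by positivity) (exp_le_one_iff.2 ?_)
  exact div_nonpos_of_nonpos_of_nonneg (neg_nonpos.2 (sq_nonneg _)) (by positivity)

lemma gaussianPDFReal_toNNReal {s : ℝ} (hs : 0 ≤ s) (m x : ℝ) :
    gaussianPDFReal m s.toNNReal x = (√(2 * π * s))⁻¹ * exp (-((x - m) ^ 2) / (2 * s)) := by
  rw [gaussianPDFReal, Real.coe_toNNReal _ hs]

lemma log_gaussianPDFReal (hv : v ≠ 0) (x : ℝ) :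
    log (gaussianPDFReal m v x) = -(log (2 * π * v) / 2) - (x - m) ^ 2 / (2 * v) := by
  have : (0 : ℝ) < v := by positivity
  rw [gaussianPDFReal, log_mul (by positivity) (exp_pos _).ne', log_inv, log_exp,
    log_sqrt (by positivity)]
  ring

lemma integrable_gaussianPDFReal_mul_iff (hv : v ≠ 0) {f : ℝ → ℝ} :
    Integrable (fun x ↦ gaussianPDFReal m v x * f x) ↔ Integrable f (gaussianReal m v) := by
  rw [gaussianReal_of_var_ne_zero _ hv, integrable_withDensity_iff_integrable_smul'
    (measurable_gaussianPDF m v) (ae_of_all _ fun _ ↦ gaussianPDF_lt_top)]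
  simp only [toReal_gaussianPDF, smul_eq_mul]

lemma integral_sub_sq_gaussianReal (c : ℝ) :
    ∫ x, (x - c) ^ 2 ∂gaussianReal m v = v + (m - c) ^ 2 := by
  have hX : MemLp (fun x ↦ x - c) 2 (gaussianReal m v) :=
    (memLp_id_gaussianReal 2).sub (memLp_const c)
  have hid : Integrable (fun x ↦ x) (gaussianReal m v) :=
    (memLp_id_gaussianReal 1).integrable le_rfl
  have hvar := variance_eq_sub hX
  rw [variance_sub_const (X := fun x ↦ x) measurable_id'.aestronglyMeasurable,
    variance_fun_id_gaussianReal, integral_sub hid (integrable_const c), integral_id_gaussianReal,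
    integral_const] at hvar
  simp only [Pi.pow_apply, probReal_univ, smul_eq_mul, one_mul] at hvar
  linarith

lemma integrable_gaussianPDFReal_mul_sub_sq (m c : ℝ) (v : ℝ≥0) :
    Integrable fun x ↦ gaussianPDFReal m v x * (x - c) ^ 2 := by
  rcases eq_or_ne v 0 with rfl | hv
  · simp
  exact (integrable_gaussianPDFReal_mul_iff hv).2
    ((memLp_id_gaussianReal 2).sub (memLp_const c)).integrable_sq

lemma integral_gaussianPDFReal_mul_sub_sq (hv : v ≠ 0) (c : ℝ) :
    ∫ x, gaussianPDFReal m v x * (x - c) ^ 2 = v + (m - c) ^ 2 := by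
  rw [← integral_sub_sq_gaussianReal c, integral_gaussianReal_eq_integral_smul hv]
  rfl

lemma mul_log_gaussianPDFReal (hv : v ≠ 0) (q x : ℝ) :
    q * log (gaussianPDFReal m v x)
      = -(log (2 * π * v) / 2) * q - (2 * (v : ℝ))⁻¹ * (q * (x - m) ^ 2) := by
  rw [log_gaussianPDFReal hv]
  ring

variable {q : ℝ → ℝ}

lemma integrable_mul_log_gaussianPDFReal (hv : v ≠ 0) (hq : Integrable q)
    (hq2 : Integrable fun x ↦ q x * (x - m) ^ 2) :
    Integrable fun x ↦ q x * log (gaussianPDFReal m v x) := by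
  simp_rw [mul_log_gaussianPDFReal hv]
  exact (hq.const_mul _).sub (hq2.const_mul _)

lemma integral_mul_log_gaussianPDFReal (hv : v ≠ 0) (hq : Integrable q)
    (hq2 : Integrable fun x ↦ q x * (x - m) ^ 2) :
    ∫ x, q x * log (gaussianPDFReal m v x)
      = -(log (2 * π * v) / 2) * (∫ x, q x) - (2 * (v : ℝ))⁻¹ * ∫ x, q x * (x - m) ^ 2 := by
  simp_rw [mul_log_gaussianPDFReal hv]
  rw [integral_sub (hq.const_mul _) (hq2.const_mul _), integral_const_mul, integral_const_mul]

lemma integral_neg_mul_log_gaussianPDFReal (hv : v ≠ 0) :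
    ∫ x, -(gaussianPDFReal m v x * log (gaussianPDFReal m v x)) = log (2 * π * v) / 2 + 1 / 2 := by
  have h2 := integrable_gaussianPDFReal_mul_sub_sq m m v
  rw [integral_neg, integral_mul_log_gaussianPDFReal hv (integrable_gaussianPDFReal m v) h2,
    integral_gaussianPDFReal_eq_one m hv, integral_gaussianPDFReal_mul_sub_sq hv, sub_self]
  have : (v : ℝ) ≠ 0 := by exact_mod_cast hv
  field_simp
  ring

theorem integral_neg_mul_log_le_of_variance_eq (hv : v ≠ 0) (hq0 : ∀ x, 0 ≤ q x)
    (hq : Integrable q) (hq2 : Integrable fun x ↦ q x * (x - m) ^ 2)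
    (hqq : Integrable fun x ↦ q x * log (q x)) (hq1 : ∫ x, q x = 1)
    (hqv : ∫ x, q x * (x - m) ^ 2 = v) :
    ∫ x, -(q x * log (q x)) ≤ log (2 * π * v) / 2 + 1 / 2 := by
  refine (integral_neg_mul_log_le hq0 (gaussianPDFReal_pos m v · hv) hq
    (integrable_gaussianPDFReal m v) (integrable_mul_log_gaussianPDFReal hv hq hq2) hqq
    (by rw [hq1, integral_gaussianPDFReal_eq_one m hv])).trans_eq ?_
  rw [integral_mul_log_gaussianPDFReal hv hq hq2, hq1, hqv]
  have : (v : ℝ) ≠ 0 := by exact_mod_cast hv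
  field_simp
  ring

end Gaussian

section Mixture

variable {ι : Type*} [Fintype ι] (w : ι → ℝ) (m : ι → ℝ) (v : ι → ℝ≥0)

noncomputable def gaussianMixturePDF (x : ℝ) : ℝ :=
  ∑ i, w i * gaussianPDFReal (m i) (v i) x

variable {w}

lemma gaussianMixturePDF_nonneg (hw : ∀ i, 0 ≤ w i) (x : ℝ) :
    0 ≤ gaussianMixturePDF w m v x :=
  sum_nonneg fun i _ ↦ mul_nonneg (hw i) (gaussianPDFReal_nonneg _ _ x)

lemma gaussianMixturePDF_le (hw : ∀ i, 0 ≤ w i) (x : ℝ) :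
    gaussianMixturePDF w m v x ≤ ∑ i, w i * (√(2 * π * v i))⁻¹ :=
  sum_le_sum fun i _ ↦ mul_le_mul_of_nonneg_left (gaussianPDFReal_le _ _ x) (hw i)

lemma measurable_gaussianMixturePDF : Measurable (gaussianMixturePDF w m v) :=
  Finset.measurable_fun_sum _ fun _ _ ↦ (measurable_gaussianPDFReal _ _).const_mul _

lemma integrable_gaussianMixturePDF : Integrable (gaussianMixturePDF w m v) :=
  integrable_finsetSum _ fun _ _ ↦ (integrable_gaussianPDFReal _ _).const_mul _

lemma integral_gaussianMixturePDF (hv : ∀ i, v i ≠ 0) :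
    ∫ x, gaussianMixturePDF w m v x = ∑ i, w i := by
  simp_rw [gaussianMixturePDF]
  rw [integral_finsetSum _ fun _ _ ↦ (integrable_gaussianPDFReal _ _).const_mul _]
  simp_rw [integral_const_mul, integral_gaussianPDFReal_eq_one _ (hv _), mul_one]

lemma integrable_gaussianMixturePDF_mul_sub_sq (c : ℝ) :
    Integrable fun x ↦ gaussianMixturePDF w m v x * (x - c) ^ 2 := by
  simp_rw [gaussianMixturePDF, sum_mul, mul_assoc]
  exact integrable_finsetSum _ fun _ _ ↦
    (integrable_gaussianPDFReal_mul_sub_sq _ c _).const_mul _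

lemma integral_gaussianMixturePDF_mul_sub_sq (hv : ∀ i, v i ≠ 0) (c : ℝ) :
    ∫ x, gaussianMixturePDF w m v x * (x - c) ^ 2 = ∑ i, w i * (v i + (m i - c) ^ 2) := by
  simp_rw [gaussianMixturePDF, sum_mul, mul_assoc]
  rw [integral_finsetSum _ fun _ _ ↦ (integrable_gaussianPDFReal_mul_sub_sq _ c _).const_mul _]
  simp_rw [integral_const_mul, integral_gaussianPDFReal_mul_sub_sq (hv _)]

lemma integrable_gaussianMixturePDF_mul_log (hw : ∀ i, 0 ≤ w i) :
    Integrable fun x ↦ gaussianMixturePDF w m v x * log (gaussianMixturePDF w m v x) :=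
  integrable_mul_log_of_le (measurable_gaussianMixturePDF m v).aestronglyMeasurable
    (gaussianMixturePDF_nonneg m v hw) (gaussianMixturePDF_le m v hw)
    (gaussianPDFReal_pos 0 1 · one_ne_zero) (integrable_gaussianMixturePDF m v)
    (integrable_gaussianPDFReal 0 1) (integrable_mul_log_gaussianPDFReal one_ne_zero
      (integrable_gaussianMixturePDF m v) (integrable_gaussianMixturePDF_mul_sub_sq m v 0))

end Mixture

/-- Entropy upper bound: H(Q) ≤ H(P) + (1/4)Σ_{i,j} w_i w_j (μ_i−μ_j)²(σ_i²+σ_j²)/(σ_i²σ_j²),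
where P is the Gaussian moment-matched to the mixture Q. -/
theorem gmm_entropy_upper_bound {C : ℕ} (w μ σ2 : Fin C → ℝ)
    (hw : ∀ i, 0 ≤ w i) (hσ : ∀ i, 0 < σ2 i) (hsum : ∑ i, w i = 1) :
    let gauss : ℝ → ℝ → ℝ → ℝ := fun m s2 x =>
      (Real.sqrt (2 * Real.pi * s2))⁻¹ * Real.exp (-((x - m) ^ 2) / (2 * s2))
    let Q : ℝ → ℝ := fun x => ∑ i, w i * gauss (μ i) (σ2 i) x
    let mbar : ℝ := ∑ i, w i * μ i
    let s2bar : ℝ := ∑ i, w i * ((μ i) ^ 2 + σ2 i) - mbar ^ 2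
    let P : ℝ → ℝ := gauss mbar s2bar
    let H : (ℝ → ℝ) → ℝ := fun p => ∫ x, -(p x * Real.log (p x))
    H Q ≤ H P + (1 / 4) * ∑ i, ∑ j, w i * w j *
      ((μ i - μ j) ^ 2 * (σ2 i + σ2 j) / (σ2 i * σ2 j)) := by
  intro gauss Q mbar s2bar P H
  set v : Fin C → ℝ≥0 := fun i ↦ (σ2 i).toNNReal
  have hv : ∀ i, v i ≠ 0 := fun i ↦ (Real.toNNReal_pos.2 (hσ i)).ne'
  have hQ : Q = gaussianMixturePDF w μ v := by
    funext x
    simp only [Q, gauss, gaussianMixturePDF, v, gaussianPDFReal_toNNReal (hσ _).le]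
  have hvar : ∑ i, w i * (v i + (μ i - mbar) ^ 2) = s2bar := by
    simp only [v, Real.coe_toNNReal _ (hσ _).le]
    exact sum_mul_add_sub_sq hsum μ σ2
  have hs2bar : 0 < s2bar :=
    hvar ▸ sum_mul_pos_of_sum_pos hw (hsum ▸ one_pos) fun i ↦ by have := hv i; positivity
  have hP : P = gaussianPDFReal mbar s2bar.toNNReal :=
    funext (gaussianPDFReal_toNNReal hs2bar.le mbar · |>.symm)
  have hHP : H P = log (2 * π * s2bar) / 2 + 1 / 2 := by
    simpa [H, hP, Real.coe_toNNReal _ hs2bar.le] using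
      integral_neg_mul_log_gaussianPDFReal (m := mbar) (Real.toNNReal_pos.2 hs2bar).ne'
  have hHQ : H Q ≤ log (2 * π * s2bar) / 2 + 1 / 2 := by
    have := integral_neg_mul_log_le_of_variance_eq (m := mbar) (Real.toNNReal_pos.2 hs2bar).ne'
      (gaussianMixturePDF_nonneg μ v hw) (integrable_gaussianMixturePDF μ v)
      (integrable_gaussianMixturePDF_mul_sub_sq μ v mbar)
      (integrable_gaussianMixturePDF_mul_log μ v hw)
      (by rw [integral_gaussianMixturePDF μ v hv, hsum])
      (by rw [integral_gaussianMixturePDF_mul_sub_sq μ v hv, hvar, Real.coe_toNNReal _ hs2bar.le])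
    rwa [Real.coe_toNNReal _ hs2bar.le, ← hQ] at this
  have hgap : 0 ≤ (1 / 4 : ℝ) * ∑ i, ∑ j, w i * w j *
      ((μ i - μ j) ^ 2 * (σ2 i + σ2 j) / (σ2 i * σ2 j)) :=
    mul_nonneg (by norm_num) <| sum_nonneg fun i _ ↦ sum_nonneg fun j _ ↦
      mul_nonneg (mul_nonneg (hw i) (hw j)) (div_nonneg
        (mul_nonneg (sq_nonneg _) (add_pos (hσ i) (hσ j)).le) (mul_pos (hσ i) (hσ j)).le)
  linarith
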